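/- Let k ≥ 2 be fixed. Then lim_{d→∞} α(d,k)/dᵏ = λ_{2,k}, where α(d,k) is the independence number of the de Bruijn graph B(d,k) and λ_{2,k} is the supremum over measurable g : [0,1]^{k−1} → {0,1} of the Lebesgue measure of {x ∈ [0,1]^k : g(x₁,…,x_{k−1}) = 1 and g(x₂,…,x_k) = 0}. Equivalently, α(d,k) = λ_{2,k}·dᵏ + o(dᵏ) as d → ∞. -/

import Mathlib

open MeasureTheory unitInterval ENNReal Filter Finset

/-- Adjacency in the de Bruijn graph `B(d,k)`. -/
def deBruijnAdj (d k : ℕ) (hk : 2 ≤ k) (u v : Fin k → Fin d) : Prop :=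
  ∀ i : Fin (k - 1), u ⟨i.1 + 1, by omega⟩ = v ⟨i.1, by omega⟩

/-- The independence number of `B(d,k)`. -/
noncomputable def deBruijnIndep (d k : ℕ) (hk : 2 ≤ k) : ℕ :=
  sSup {n : ℕ | ∃ S : Finset (Fin k → Fin d),
    (∀ u ∈ S, ∀ v ∈ S, ¬ deBruijnAdj d k hk u v) ∧ S.card = n}

/-- The threshold λ_{2,k}. -/
noncomputable def lam2K (k : ℕ) (hk : 2 ≤ k) : ℝ≥0∞ :=
  ⨆ (g : (Fin (k - 1) → I) → Fin 2) (_ : Measurable g),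
    volume {x : Fin k → I |
      g (fun i => x (Fin.castLE (by omega) i)) >
      g (fun i => x ⟨i.1 + 1, by omega⟩)}

namespace S9
variable {k : ℕ}

def preW (d k : ℕ) (x : Fin k → Fin d) : Fin (k-1) → Fin d :=
  fun i => x (Fin.castLE (Nat.sub_le k 1) i)

def sufW (d k : ℕ) (x : Fin k → Fin d) : Fin (k-1) → Fin d :=
  fun i => x ⟨i.1 + 1, by omega⟩

lemma adj_iff (d : ℕ) (hk : 2 ≤ k) (u v : Fin k → Fin d) :
    deBruijnAdj d k hk u v ↔ sufW d k u = preW d k v := by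
  rw [funext_iff]; rfl

def fsetW (d k : ℕ) (A : Finset (Fin (k-1) → Fin d)) : Finset (Fin k → Fin d) :=
  Finset.univ.filter (fun x => preW d k x ∈ A ∧ sufW d k x ∉ A)

lemma mem_fsetW {d : ℕ} {A : Finset (Fin (k-1) → Fin d)} {x : Fin k → Fin d} :
    x ∈ fsetW d k A ↔ preW d k x ∈ A ∧ sufW d k x ∉ A := by
  simp [fsetW]

lemma indep_fsetW (d : ℕ) (hk : 2 ≤ k) (A : Finset (Fin (k-1) → Fin d)) :
    ∀ u ∈ fsetW d k A, ∀ v ∈ fsetW d k A, ¬ deBruijnAdj d k hk u v := by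
  intro u hu v hv hadj
  rw [adj_iff] at hadj
  exact (mem_fsetW.1 hu).2 (hadj ▸ (mem_fsetW.1 hv).1)

lemma bddAboveIndep (d : ℕ) (hk : 2 ≤ k) :
    BddAbove {n : ℕ | ∃ S : Finset (Fin k → Fin d),
      (∀ u ∈ S, ∀ v ∈ S, ¬ deBruijnAdj d k hk u v) ∧ S.card = n} := by
  refine ⟨Fintype.card (Fin k → Fin d), ?_⟩
  rintro n ⟨S, -, rfl⟩
  exact S.card_le_univ

lemma fsetW_card_le (d : ℕ) (hk : 2 ≤ k) (A : Finset (Fin (k-1) → Fin d)) :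
    (fsetW d k A).card ≤ deBruijnIndep d k hk :=
  le_csSup (bddAboveIndep d hk) ⟨fsetW d k A, indep_fsetW d hk A, rfl⟩

lemma exists_A (d : ℕ) (hk : 2 ≤ k) :
    ∃ A : Finset (Fin (k-1) → Fin d), deBruijnIndep d k hk = (fsetW d k A).card := by
  have hmem : deBruijnIndep d k hk ∈ {n : ℕ | ∃ S : Finset (Fin k → Fin d),
      (∀ u ∈ S, ∀ v ∈ S, ¬ deBruijnAdj d k hk u v) ∧ S.card = n} :=
    Nat.sSup_mem ⟨0, ∅, by simp⟩ (bddAboveIndep d hk)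
  obtain ⟨S, hS, hcard⟩ := hmem
  refine ⟨S.image (preW d k), le_antisymm ?_ (fsetW_card_le d hk _)⟩
  rw [← hcard]
  apply Finset.card_le_card
  intro x hx
  rw [mem_fsetW]
  refine ⟨Finset.mem_image_of_mem _ hx, fun hmem => ?_⟩
  obtain ⟨y, hy, hxy⟩ := Finset.mem_image.1 hmem
  exact hS x hx y hy ((adj_iff d hk x y).2 hxy.symm)

lemma indep_mono (hk : 2 ≤ k) {d d' : ℕ} (h : d ≤ d') :
    deBruijnIndep d k hk ≤ deBruijnIndep d' k hk := by
  have hmem : deBruijnIndep d k hk ∈ {n : ℕ | ∃ S : Finset (Fin k → Fin d),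
      (∀ u ∈ S, ∀ v ∈ S, ¬ deBruijnAdj d k hk u v) ∧ S.card = n} :=
    Nat.sSup_mem ⟨0, ∅, by simp⟩ (bddAboveIndep d hk)
  obtain ⟨S, hS, hcard⟩ := hmem
  set emb : (Fin k → Fin d) → (Fin k → Fin d') := fun x i => Fin.castLE h (x i) with hembdef
  have hinj : Function.Injective emb := by
    intro x y hxy
    funext i
    have := congrFun hxy i
    exact Fin.castLE_injective h this
  refine le_csSup (bddAboveIndep d' hk) ⟨S.image emb, ?_, by rw [Finset.card_image_of_injective _ hinj, hcard]⟩
  intro u hu v hv hadj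
  obtain ⟨x, hx, rfl⟩ := Finset.mem_image.1 hu
  obtain ⟨y, hy, rfl⟩ := Finset.mem_image.1 hv
  refine hS x hx y hy (fun i => ?_)
  have := hadj i
  exact Fin.castLE_injective h this


def pim (m d : ℕ) (a : Fin (m*d)) : Fin d :=
  ⟨a.1 / m, by
    rcases a with ⟨a, ha⟩
    exact Nat.div_lt_of_lt_mul (by omega : a < m * d)⟩

lemma fiber_card (m d : ℕ) (hm : 0 < m) (j : Fin d) :
    (Finset.univ.filter (fun a : Fin (m*d) => pim m d a = j)).card = m := by
  have hlt : ∀ i : Fin m, j.1 * m + i.1 < m * d := by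
    intro i
    calc j.1 * m + i.1 < (j.1 + 1) * m := by nlinarith [i.2]
    _ ≤ d * m := Nat.mul_le_mul_right m j.2
    _ = m * d := Nat.mul_comm d m
  have key : (Finset.univ.filter (fun a : Fin (m*d) => pim m d a = j)).card =
      (Finset.univ : Finset (Fin m)).card := by
    apply Finset.card_bij' (fun a _ => (⟨a.1 % m, Nat.mod_lt _ hm⟩ : Fin m))
      (fun i _ => (⟨j.1 * m + i.1, hlt i⟩ : Fin (m*d)))
    · intro a ha; exact Finset.mem_univ _
    · intro i _
      simp only [Finset.mem_filter, Finset.mem_univ, true_and]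
      apply Fin.ext
      show (j.1 * m + i.1) / m = j.1
      rw [Nat.add_comm, Nat.add_mul_div_right _ _ hm, Nat.div_eq_of_lt i.2, Nat.zero_add]
    · intro a ha
      simp only [Finset.mem_filter, Finset.mem_univ, true_and] at ha
      have h1 : a.1 / m = j.1 := congrArg Fin.val ha
      apply Fin.ext
      show j.1 * m + a.1 % m = a.1
      rw [← h1]
      exact Nat.div_add_mod' a.1 m
    · intro i _
      apply Fin.ext
      show (j.1 * m + i.1) % m = i.1
      rw [Nat.add_comm, Nat.add_mul_mod_self_right]
      exact Nat.mod_eq_of_lt i.2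
  rw [key, Finset.card_univ, Fintype.card_fin]



lemma word_fiber_card (m d kk : ℕ) (hm : 0 < m) (y : Fin kk → Fin d) :
    (Finset.univ.filter (fun x : Fin kk → Fin (m*d) => (fun i => pim m d (x i)) = y)).card = m ^ kk := by
  rw [← Fintype.card_subtype]
  have e1 : {x : Fin kk → Fin (m*d) // (fun i => pim m d (x i)) = y} ≃
      ∀ i, {b : Fin (m*d) // pim m d b = y i} :=
    (Equiv.subtypeEquivRight (fun x => funext_iff)).trans (Equiv.subtypePiEquivPi (p := fun i b => pim m d b = y i))
  rw [Fintype.card_congr e1, Fintype.card_pi]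
  have h : ∀ i, Fintype.card {b : Fin (m*d) // pim m d b = y i} = m := by
    intro i; rw [Fintype.card_subtype]; exact fiber_card m d hm (y i)
  simp [h]

lemma indep_scale (hk : 2 ≤ k) (d m : ℕ) (hm : 0 < m) :
    m ^ k * deBruijnIndep d k hk ≤ deBruijnIndep (m*d) k hk := by
  obtain ⟨A, hA⟩ := exists_A d hk
  set A' : Finset (Fin (k-1) → Fin (m*d)) :=
    Finset.univ.filter (fun w => (fun i => pim m d (w i)) ∈ A) with hA'def
  have key : fsetW (m*d) k A' =
      Finset.univ.filter (fun x : Fin k → Fin (m*d) => (fun i => pim m d (x i)) ∈ fsetW d k A) := by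
    ext x
    simp only [mem_fsetW, Finset.mem_filter, Finset.mem_univ, true_and, hA'def]
    rfl
  have hcard : (fsetW (m*d) k A').card = (fsetW d k A).card * m ^ k := by
    rw [key, Finset.card_eq_sum_card_fiberwise
      (f := fun x : Fin k → Fin (m*d) => (fun i => pim m d (x i))) (t := fsetW d k A)
      (s := Finset.univ.filter (fun x : Fin k → Fin (m*d) => (fun i => pim m d (x i)) ∈ fsetW d k A))
      (fun x hx => (Finset.mem_filter.1 hx).2)]
    rw [Finset.sum_congr rfl (fun y hy => ?_), Finset.sum_const, smul_eq_mul]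
    have hfe : (Finset.univ.filter
          (fun x : Fin k → Fin (m*d) => (fun i => pim m d (x i)) ∈ fsetW d k A)).filter
          (fun x => (fun i => pim m d (x i)) = y) =
        Finset.univ.filter (fun x : Fin k → Fin (m*d) => (fun i => pim m d (x i)) = y) := by
      ext x
      simp only [Finset.mem_filter, Finset.mem_univ, true_and]
      constructor
      · rintro ⟨-, h2⟩; exact h2
      · intro h2; exact ⟨h2 ▸ hy, h2⟩
    rw [hfe, word_fiber_card m d k hm y]
  calc m ^ k * deBruijnIndep d k hk = (fsetW (m*d) k A').card := by
        rw [hA, hcard, Nat.mul_comm]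
  _ ≤ deBruijnIndep (m*d) k hk := fsetW_card_le (m*d) hk A'

noncomputable def cd (d : ℕ) (hd : 0 < d) (t : I) : Fin d :=
  ⟨min ⌊(t:ℝ)*d⌋₊ (d-1), by omega⟩

lemma volI_preimage (S : Set ℝ) :
    (volume : Measure I) (Subtype.val ⁻¹' S) = volume (S ∩ Set.Icc 0 1) := by
  rw [show (volume : Measure I) = Measure.comap Subtype.val volume from rfl,
    (MeasurableEmbedding.subtype_coe measurableSet_Icc).comap_apply]
  congr 1
  rw [Set.image_preimage_eq_inter_range, Subtype.range_coe]

lemma cd_preimage (d : ℕ) (hd : 0 < d) (j : Fin d) :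
    cd d hd ⁻¹' {j} = Subtype.val ⁻¹'
      (if j.1 = d-1 then Set.Icc (((d:ℝ)-1)/d) 1
        else Set.Ico ((j.1:ℝ)/d) ((j.1+1)/d)) := by
  have hd' : (0:ℝ) < d := by positivity
  have hc : ((d-1:ℕ):ℝ) = (d:ℝ) - 1 := by
    rw [Nat.cast_sub (by omega : 1 ≤ d)]; norm_num
  ext t
  have htd : (0:ℝ) ≤ (t:ℝ) * d := mul_nonneg t.2.1 (le_of_lt hd')
  simp only [Set.mem_preimage, Set.mem_singleton_iff, cd, Fin.ext_iff]
  by_cases h : j.1 = d - 1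
  · rw [if_pos h, h]
    show min ⌊(t:ℝ)*d⌋₊ (d-1) = d-1 ↔ _
    rw [min_eq_right_iff, Nat.le_floor_iff htd, hc, Set.mem_Icc]
    constructor
    · intro hle
      exact ⟨by rw [div_le_iff₀ hd']; exact hle, t.2.2⟩
    · rintro ⟨h1, -⟩
      rw [div_le_iff₀ hd'] at h1; exact h1
  · rw [if_neg h]
    have hj : j.1 < d - 1 := by have := j.2; omega
    have hmin : min ⌊(t:ℝ)*d⌋₊ (d-1) = j.1 ↔ ⌊(t:ℝ)*d⌋₊ = j.1 := by omega
    rw [hmin, Nat.floor_eq_iff htd, Set.mem_Ico]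
    constructor
    · rintro ⟨h1, h2⟩
      exact ⟨by rw [div_le_iff₀ hd']; exact h1, by rw [lt_div_iff₀ hd']; exact h2⟩
    · rintro ⟨h1, h2⟩
      exact ⟨by rw [div_le_iff₀ hd'] at h1; exact h1, by rw [lt_div_iff₀ hd'] at h2; exact h2⟩

lemma measurable_cd (d : ℕ) (hd : 0 < d) : Measurable (cd d hd) := by
  apply measurable_to_countable'
  intro j
  rw [cd_preimage]
  split_ifs
  exacts [measurable_subtype_coe measurableSet_Icc, measurable_subtype_coe measurableSet_Ico]

lemma ofReal_one_div (d : ℕ) (hd : 0 < d) :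
    ENNReal.ofReal (1/(d:ℝ)) = ((d:ℝ≥0∞))⁻¹ := by
  rw [ENNReal.ofReal_div_of_pos (by positivity), ENNReal.ofReal_one,
    ENNReal.ofReal_natCast, one_div]

lemma vol_cd (d : ℕ) (hd : 0 < d) (j : Fin d) :
    (volume : Measure I) (cd d hd ⁻¹' {j}) = ((d:ℝ≥0∞))⁻¹ := by
  have hd' : (0:ℝ) < d := by positivity
  have hd1 : (1:ℝ) ≤ d := by exact_mod_cast hd
  rw [cd_preimage, volI_preimage]
  split_ifs with h
  · have h0 : (0:ℝ) ≤ ((d:ℝ)-1)/d := div_nonneg (by linarith) (le_of_lt hd')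
    rw [Set.inter_eq_left.2 (Set.Icc_subset_Icc h0 le_rfl), Real.volume_Icc]
    rw [show (1:ℝ) - ((d:ℝ)-1)/d = 1/d by field_simp; ring]
    exact ofReal_one_div d hd
  · have hsub : Set.Ico ((j.1:ℝ)/d) ((j.1+1)/d) ⊆ Set.Icc 0 1 := by
      intro r hr
      refine ⟨le_trans (by positivity) hr.1, le_trans (le_of_lt hr.2) ?_⟩
      rw [div_le_one hd']
      have hj : j.1 + 1 ≤ d := j.2
      exact_mod_cast hj
    rw [Set.inter_eq_left.2 hsub, Real.volume_Ico]
    rw [show ((j.1:ℝ)+1)/d - (j.1:ℝ)/d = 1/d by field_simp; ring]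
    exact ofReal_one_div d hd

lemma cd_bounds (d : ℕ) (hd : 0 < d) (t : I) :
    ((cd d hd t).1:ℝ)/d ≤ (t:ℝ) ∧ (t:ℝ) ≤ (((cd d hd t).1:ℝ)+1)/d := by
  have hd' : (0:ℝ) < d := by positivity
  have ht : t ∈ cd d hd ⁻¹' {cd d hd t} := rfl
  rw [cd_preimage] at ht
  simp only [Set.mem_preimage] at ht
  split_ifs at ht with h
  · have hcast : (((cd d hd t).1:ℝ)) = (d:ℝ) - 1 := by
      rw [h, Nat.cast_sub (by omega : 1 ≤ d)]
      norm_num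
    rw [hcast]
    refine ⟨ht.1, ?_⟩
    have h1 : ((d:ℝ) - 1 + 1)/d = 1 := by field_simp; ring
    rw [h1]
    exact t.2.2
  · exact ⟨ht.1, le_of_lt ht.2⟩

-- cell maps
noncomputable def cellMap (d m : ℕ) (hd : 0 < d) (x : Fin m → I) : Fin m → Fin d :=
  fun i => cd d hd (x i)

lemma measurable_cellMap (d m : ℕ) (hd : 0 < d) : Measurable (cellMap d m hd) :=
  measurable_pi_lambda _ (fun i => (measurable_cd d hd).comp (measurable_pi_apply i))

lemma vol_cellMap_single (d m : ℕ) (hd : 0 < d) (w : Fin m → Fin d) :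
    volume (cellMap d m hd ⁻¹' {w}) = ((d:ℝ≥0∞))⁻¹ ^ m := by
  have : cellMap d m hd ⁻¹' {w} = Set.pi Set.univ (fun i => cd d hd ⁻¹' {w i}) := by
    ext x
    simp [cellMap, funext_iff, Set.mem_pi]
  rw [this, volume_pi_pi]
  simp only [vol_cd d hd]
  rw [Finset.prod_const, Finset.card_univ, Fintype.card_fin]

lemma vol_cellMap_finset (d m : ℕ) (hd : 0 < d) (T : Finset (Fin m → Fin d)) :
    volume (cellMap d m hd ⁻¹' ↑T) = T.card * ((d:ℝ≥0∞))⁻¹ ^ m := by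
  have : (↑T : Set (Fin m → Fin d)) = ⋃ w ∈ T, {w} := by
    ext z; simp
  rw [this, Set.preimage_iUnion₂]
  rw [measure_biUnion_finset ?_ ?_]
  · simp [vol_cellMap_single d m hd, Finset.sum_const]
  · intro x hx y hy hxy
    apply Set.disjoint_left.2
    intro z hzx hzy
    exact hxy (by rw [← Set.mem_singleton_iff.1 hzx, Set.mem_singleton_iff.1 hzy])
  · intro w _
    exact measurable_cellMap d m hd (measurableSet_singleton w)

lemma measurePreserving_comp_inj {mI kI : ℕ} (e : Fin mI → Fin kI) (he : Function.Injective e) :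
    MeasurePreserving (fun x : Fin kI → I => (fun i => x (e i)))
      (volume : Measure (Fin kI → I)) (volume : Measure (Fin mI → I)) := by
  have hmeas : Measurable (fun x : Fin kI → I => (fun i => x (e i))) :=
    measurable_pi_lambda _ (fun i => measurable_pi_apply (e i))
  refine ⟨hmeas, ?_⟩
  rw [show (volume : Measure (Fin mI → I)) = Measure.pi (fun _ => volume) from volume_pi]
  refine (Measure.pi_eq (fun s hs => ?_)).symm
  rw [Measure.map_apply hmeas (MeasurableSet.univ_pi hs)]
  classical
  set t : Fin kI → Set I := fun j => if h : ∃ i, e i = j then s h.choose else Set.univ with htdef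
  have hpre : (fun x : Fin kI → I => (fun i => x (e i))) ⁻¹' (Set.pi Set.univ s) =
      Set.pi Set.univ t := by
    ext x
    simp only [Set.mem_preimage, Set.mem_pi, Set.mem_univ, forall_true_left, true_implies]
    constructor
    · intro hx j
      by_cases h : ∃ i, e i = j
      · have : t j = s h.choose := by simp [htdef, h]
        rw [this]
        have hxc := hx h.choose
        rwa [h.choose_spec] at hxc
      · simp [htdef, h]
    · intro hx i
      have h : ∃ i', e i' = e i := ⟨i, rfl⟩
      have hch : h.choose = i := he h.choose_spec
      have := hx (e i)
      rw [show t (e i) = s h.choose by simp [htdef, h], hch] at this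
      exact this
  rw [hpre, volume_pi_pi]
  have h1 : ∀ j ∉ (Finset.univ.image e), volume (t j) = 1 := by
    intro j hj
    have h : ¬ ∃ i, e i = j := by
      intro ⟨i, hi⟩
      exact hj (Finset.mem_image.2 ⟨i, Finset.mem_univ i, hi⟩)
    simp [htdef, h]
  rw [← Finset.prod_subset (Finset.subset_univ (Finset.univ.image e))
    (fun j _ hj => h1 j hj)]
  rw [Finset.prod_image (fun i _ i' _ h => he h)]
  refine Finset.prod_congr rfl (fun i _ => ?_)
  have h : ∃ i', e i' = e i := ⟨i, rfl⟩
  have hch : h.choose = i := he h.choose_spec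
  rw [show t (e i) = s h.choose by simp [htdef, h], hch]


end S9

namespace S9

lemma fin2_gt_iff : ∀ a b : Fin 2, a > b ↔ a = 1 ∧ ¬ b = 1 := by decide

lemma measurable_words {m d : ℕ} {β : Type*} [MeasurableSpace β]
    (h : (Fin m → Fin d) → β) : Measurable h :=
  fun s _ => (Set.to_countable (h ⁻¹' s)).measurableSet

lemma indep_le_lam (k : ℕ) (hk : 2 ≤ k) (d : ℕ) (hd : 0 < d) :
    (deBruijnIndep d k hk : ℝ≥0∞) * ((d:ℝ≥0∞))⁻¹ ^ k ≤ lam2K k hk := by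
  obtain ⟨A, hA⟩ := exists_A d hk
  set h : (Fin (k-1) → Fin d) → Fin 2 := fun w => if w ∈ A then 1 else 0 with hhdef
  set g : (Fin (k-1) → I) → Fin 2 := fun y => h (cellMap d (k-1) hd y) with hgdef
  have hgm : Measurable g := (measurable_words h).comp (measurable_cellMap d (k-1) hd)
  have hset : {x : Fin k → I |
      g (fun i => x (Fin.castLE (by omega : k - 1 ≤ k) i)) >
      g (fun i => x ⟨i.1 + 1, by omega⟩)} = cellMap d k hd ⁻¹' ↑(fsetW d k A) := by
    ext x
    simp only [Set.mem_setOf_eq, Set.mem_preimage, Finset.mem_coe, mem_fsetW]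
    rw [fin2_gt_iff]
    show (h (preW d k (cellMap d k hd x)) = 1 ∧ ¬ h (sufW d k (cellMap d k hd x)) = 1) ↔ _
    by_cases h1 : preW d k (cellMap d k hd x) ∈ A <;>
      by_cases h2 : sufW d k (cellMap d k hd x) ∈ A <;>
      simp [hhdef, h1, h2]
  calc (deBruijnIndep d k hk : ℝ≥0∞) * ((d:ℝ≥0∞))⁻¹ ^ k
      = volume {x : Fin k → I |
          g (fun i => x (Fin.castLE (by omega : k - 1 ≤ k) i)) >
          g (fun i => x ⟨i.1 + 1, by omega⟩)} := by
        rw [hset, vol_cellMap_finset, hA]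
  _ ≤ lam2K k hk := by
        refine le_trans ?_ (le_iSup _ g)
        exact le_iSup (fun _ : Measurable g => volume _) hgm

end S9

namespace S9

lemma lam_approx (k : ℕ) (hk : 2 ≤ k) (g : (Fin (k-1) → I) → Fin 2) (hg : Measurable g)
    (ε : ℝ≥0∞) (hε : ε ≠ 0) :
    ∃ d : ℕ, 0 < d ∧
      volume {x : Fin k → I |
        g (fun i => x (Fin.castLE (by omega : k - 1 ≤ k) i)) >
        g (fun i => x ⟨i.1 + 1, by omega⟩)} ≤
      (deBruijnIndep d k hk : ℝ≥0∞) * ((d:ℝ≥0∞))⁻¹ ^ k + ε := by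
  classical
  set preF : (Fin k → I) → (Fin (k-1) → I) :=
    fun x => fun i => x (Fin.castLE (Nat.sub_le k 1) i) with hpreF
  set sufF : (Fin k → I) → (Fin (k-1) → I) :=
    fun x => fun i => x ⟨i.1 + 1, by omega⟩ with hsufF
  have hpre : MeasurePreserving preF volume volume :=
    measurePreserving_comp_inj _ (Fin.castLE_injective _)
  have hsuf : MeasurePreserving sufF volume volume := by
    apply measurePreserving_comp_inj (fun i : Fin (k-1) => (⟨i.1+1, by omega⟩ : Fin k))
    intro i j hij
    apply Fin.ext
    have := congrArg Fin.val hij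
    simpa using this
  set Ag : Set (Fin (k-1) → I) := g ⁻¹' {1} with hAg
  have hAgm : MeasurableSet Ag := hg (measurableSet_singleton 1)
  have hsetEq : {x : Fin k → I |
      g (fun i => x (Fin.castLE (by omega : k - 1 ≤ k) i)) >
      g (fun i => x ⟨i.1 + 1, by omega⟩)} = preF ⁻¹' Ag ∩ sufF ⁻¹' Agᶜ := by
    ext x
    simp only [Set.mem_setOf_eq, Set.mem_inter_iff, Set.mem_preimage, Set.mem_compl_iff,
      hAg, Set.mem_singleton_iff]
    exact fin2_gt_iff _ _
  set ε' : ℝ≥0∞ := ε / 2 / 2 with hε'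
  have hε'0 : ε' ≠ 0 := by simp [hε', ENNReal.div_eq_zero_iff, hε]
  obtain ⟨K, hKA, hKc, hKvol⟩ := hAgm.exists_isCompact_diff_lt (μ := volume) (measure_ne_top _ _) hε'0
  obtain ⟨U, hUA, hUo, -, hUvol⟩ := hAgm.exists_isOpen_diff_lt (μ := volume) (measure_ne_top _ _) hε'0
  obtain ⟨δ, hδ0, hδU⟩ := hKc.exists_thickening_subset_open hUo (hKA.trans hUA)
  obtain ⟨n, hn⟩ := exists_nat_one_div_lt hδ0
  set d : ℕ := n + 1 with hddef
  have hd : 0 < d := Nat.succ_pos n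
  have hdδ : 1 / (d:ℝ) < δ := by
    rw [hddef]
    push_cast
    exact hn
  set B : Finset (Fin (k-1) → Fin d) :=
    Finset.univ.filter (fun w => (cellMap d (k-1) hd ⁻¹' {w} ∩ K).Nonempty) with hBdef
  set C : Set (Fin (k-1) → I) := cellMap d (k-1) hd ⁻¹' ↑B with hCdef
  have hCm : MeasurableSet C :=
    measurable_cellMap d (k-1) hd (Set.Finite.measurableSet (B.finite_toSet))
  have hKC : K ⊆ C := by
    intro y hy
    have hmem : cellMap d (k-1) hd y ∈ B := by
      rw [hBdef, Finset.mem_filter]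
      exact ⟨Finset.mem_univ _, ⟨y, rfl, hy⟩⟩
    exact Finset.mem_coe.2 hmem
  have hCU : C ⊆ U := by
    intro x hx
    simp only [hCdef, Set.mem_preimage, hBdef, Finset.coe_filter, Finset.mem_univ,
      Set.mem_setOf_eq, true_and] at hx
    obtain ⟨y, hy1, hy2⟩ := hx
    have hy1' : cellMap d (k-1) hd y = cellMap d (k-1) hd x := hy1
    have hdist : dist x y ≤ 1 / (d:ℝ) := by
      refine (dist_pi_le_iff (by positivity)).2 (fun i => ?_)
      rw [Subtype.dist_eq]
      have hb1 := cd_bounds d hd (x i)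
      have hb2 := cd_bounds d hd (y i)
      have hco : cd d hd (y i) = cd d hd (x i) := congrFun hy1' i
      rw [hco] at hb2
      set j : ℕ := (cd d hd (x i)).1
      have key := Real.dist_le_of_mem_Icc
        (x := ((x i : ℝ))) (y := ((y i : ℝ)))
        (x' := (j:ℝ)/d) (y' := ((j:ℝ)+1)/d) ⟨hb1.1, hb1.2⟩ ⟨hb2.1, hb2.2⟩
      have heq : ((j:ℝ)+1)/d - (j:ℝ)/d = 1/d := by field_simp; ring
      rw [heq] at key
      exact key
    exact hδU (Metric.mem_thickening_iff.2 ⟨y, hy2, lt_of_le_of_lt hdist hdδ⟩)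
  have hUK : volume (U \ K) ≤ ε' + ε' := by
    have hincl : U \ K ⊆ (U \ Ag) ∪ (Ag \ K) := by
      rintro x ⟨h1, h2⟩
      by_cases hA : x ∈ Ag
      · exact Or.inr ⟨hA, h2⟩
      · exact Or.inl ⟨h1, hA⟩
    exact le_trans (measure_mono hincl)
      (le_trans (measure_union_le _ _) (add_le_add hUvol.le hKvol.le))
  have hAC : volume (Ag \ C) ≤ ε' + ε' := by
    refine le_trans (measure_mono ?_) hUK
    rintro x ⟨h1, h2⟩
    exact ⟨hUA h1, fun hK => h2 (hKC hK)⟩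
  have hCA : volume (C \ Ag) ≤ ε' + ε' := by
    refine le_trans (measure_mono ?_) hUK
    rintro x ⟨h1, h2⟩
    exact ⟨hCU h1, fun hK => h2 (hKA hK)⟩
  have hmain : preF ⁻¹' Ag ∩ sufF ⁻¹' Agᶜ ⊆
      (preF ⁻¹' C ∩ sufF ⁻¹' Cᶜ) ∪ (preF ⁻¹' (Ag \ C) ∪ sufF ⁻¹' (C \ Ag)) := by
    rintro x ⟨hx1, hx2⟩
    by_cases hpc : preF x ∈ C
    · by_cases hsc : sufF x ∈ C
      · exact Or.inr (Or.inr ⟨hsc, hx2⟩)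
      · exact Or.inl ⟨hpc, hsc⟩
    · exact Or.inr (Or.inl ⟨hx1, hpc⟩)
  have hvol1 : preF ⁻¹' C ∩ sufF ⁻¹' Cᶜ = cellMap d k hd ⁻¹' ↑(fsetW d k B) := by
    ext x
    simp only [Set.mem_inter_iff, Set.mem_preimage, Set.mem_compl_iff, hCdef,
      Finset.mem_coe, mem_fsetW]
    exact Iff.rfl
  rw [hsetEq]
  refine ⟨d, hd, ?_⟩
  calc volume (preF ⁻¹' Ag ∩ sufF ⁻¹' Agᶜ)
      ≤ volume ((preF ⁻¹' C ∩ sufF ⁻¹' Cᶜ) ∪ (preF ⁻¹' (Ag \ C) ∪ sufF ⁻¹' (C \ Ag))) :=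
        measure_mono hmain
  _ ≤ volume (preF ⁻¹' C ∩ sufF ⁻¹' Cᶜ) +
        (volume (preF ⁻¹' (Ag \ C)) + volume (sufF ⁻¹' (C \ Ag))) :=
        le_trans (measure_union_le _ _) (add_le_add le_rfl (measure_union_le _ _))
  _ = volume (preF ⁻¹' C ∩ sufF ⁻¹' Cᶜ) + (volume (Ag \ C) + volume (C \ Ag)) := by
        rw [hpre.measure_preimage (hAgm.diff hCm).nullMeasurableSet,
          hsuf.measure_preimage (hCm.diff hAgm).nullMeasurableSet]
  _ ≤ volume (preF ⁻¹' C ∩ sufF ⁻¹' Cᶜ) + ((ε' + ε') + (ε' + ε')) := by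
        exact add_le_add le_rfl (add_le_add hAC hCA)
  _ = volume (preF ⁻¹' C ∩ sufF ⁻¹' Cᶜ) + ε := by
        congr 1
        rw [hε']
        rw [ENNReal.add_halves (ε/2), ENNReal.add_halves ε]
  _ ≤ (deBruijnIndep d k hk : ℝ≥0∞) * ((d:ℝ≥0∞))⁻¹ ^ k + ε := by
        refine add_le_add ?_ le_rfl
        rw [hvol1, vol_cellMap_finset]
        exact mul_le_mul_left (Nat.cast_le.2 (fsetW_card_le d hk B)) _

end S9

namespace S9

lemma lam_ne_top (k : ℕ) (hk : 2 ≤ k) : lam2K k hk ≠ ⊤ := by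
  have h1 : lam2K k hk ≤ 1 := by
    refine iSup_le (fun g => iSup_le (fun hg => ?_))
    refine le_trans (measure_mono (Set.subset_univ _)) ?_
    simp
  exact ne_top_of_le_ne_top ENNReal.one_ne_top h1

lemma ratio_eq (k d : ℕ) (hk : 2 ≤ k) (hd : 0 < d) :
    ((deBruijnIndep d k hk : ℝ≥0∞) * ((d:ℝ≥0∞))⁻¹ ^ k).toReal
      = (deBruijnIndep d k hk : ℝ) / (d:ℝ) ^ k := by
  rw [ENNReal.toReal_mul, ENNReal.toReal_pow, ENNReal.toReal_inv]
  simp [div_eq_mul_inv, inv_pow]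

lemma term_ne_top (k d : ℕ) (hk : 2 ≤ k) (hd : 0 < d) :
    (deBruijnIndep d k hk : ℝ≥0∞) * ((d:ℝ≥0∞))⁻¹ ^ k ≠ ⊤ := by
  apply ENNReal.mul_ne_top (ENNReal.natCast_ne_top _)
  apply ENNReal.pow_ne_top
  rw [ENNReal.inv_ne_top]
  exact_mod_cast Nat.pos_iff_ne_zero.1 hd

lemma F1 (k : ℕ) (hk : 2 ≤ k) (d : ℕ) (hd : 0 < d) :
    (deBruijnIndep d k hk : ℝ) / (d:ℝ) ^ k ≤ (lam2K k hk).toReal := by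
  rw [← ratio_eq k d hk hd]
  exact (ENNReal.toReal_le_toReal (term_ne_top k d hk hd) (lam_ne_top k hk)).2
    (indep_le_lam k hk d hd)

lemma F2 (k : ℕ) (hk : 2 ≤ k) (ε : ℝ) (hε : 0 < ε) :
    ∃ d : ℕ, 0 < d ∧
      (lam2K k hk).toReal - ε ≤ (deBruijnIndep d k hk : ℝ) / (d:ℝ) ^ k := by
  set T := (lam2K k hk).toReal with hT
  by_cases hTs : T ≤ ε / 2
  · refine ⟨1, Nat.one_pos, ?_⟩
    have h0 : (0:ℝ) ≤ (deBruijnIndep 1 k hk : ℝ) / (1:ℝ) ^ k := by positivity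
    push_cast at h0 ⊢
    linarith
  · push_neg at hTs
    have hofR : ENNReal.ofReal (T - ε/2) < lam2K k hk := by
      rw [← ENNReal.ofReal_toReal (lam_ne_top k hk)]
      rw [ENNReal.ofReal_lt_ofReal_iff (by linarith)]
      linarith
    rw [lam2K] at hofR
    rw [lt_iSup_iff] at hofR
    obtain ⟨g, hg⟩ := hofR
    rw [lt_iSup_iff] at hg
    obtain ⟨hgm, hglt⟩ := hg
    obtain ⟨d, hd, hle⟩ := lam_approx k hk g hgm (ENNReal.ofReal (ε/2))
      (ne_of_gt (ENNReal.ofReal_pos.2 (by linarith)))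
    refine ⟨d, hd, ?_⟩
    have hchain : ENNReal.ofReal (T - ε/2) ≤
        (deBruijnIndep d k hk : ℝ≥0∞) * ((d:ℝ≥0∞))⁻¹ ^ k + ENNReal.ofReal (ε/2) :=
      le_trans hglt.le hle
    have hfin : (deBruijnIndep d k hk : ℝ≥0∞) * ((d:ℝ≥0∞))⁻¹ ^ k + ENNReal.ofReal (ε/2) ≠ ⊤ :=
      ENNReal.add_ne_top.2 ⟨term_ne_top k d hk hd, ENNReal.ofReal_ne_top⟩
    have := (ENNReal.toReal_le_toReal ENNReal.ofReal_ne_top hfin).2 hchain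
    rw [ENNReal.toReal_ofReal (by linarith : (0:ℝ) ≤ T - ε/2)] at this
    rw [ENNReal.toReal_add (term_ne_top k d hk hd) ENNReal.ofReal_ne_top,
      ratio_eq k d hk hd, ENNReal.toReal_ofReal (by linarith : (0:ℝ) ≤ ε/2)] at this
    linarith

end S9


/-- `α(d,k)/d^k → λ_{2,k}` as `d → ∞`. -/
theorem stmt_9 (k : ℕ) (hk : 2 ≤ k) :
    Tendsto (fun d : ℕ => (deBruijnIndep d k hk : ℝ) / (d : ℝ) ^ k) atTop
      (nhds (lam2K k hk).toReal) := by
  set T := (lam2K k hk).toReal with hT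
  rw [tendsto_order]
  constructor
  · intro a ha
    obtain ⟨d₀, hd₀, hr₀⟩ := S9.F2 k hk ((T - a)/2) (by linarith)
    set c := (deBruijnIndep d₀ k hk : ℝ) / (d₀:ℝ) ^ k with hc
    have hac : a < c := by
      have : T - (T - a)/2 = (T + a)/2 := by ring
      rw [this] at hr₀
      linarith
    have hcnn : 0 ≤ c := by positivity
    have haux : Tendsto (fun d : ℕ => (1 - (d₀:ℝ)/d)^k * c) atTop (nhds c) := by
      have h1 : Tendsto (fun d : ℕ => (d₀:ℝ)/d) atTop (nhds 0) :=
        tendsto_const_div_atTop_nhds_zero_nat (d₀:ℝ)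
      have h2 := ((tendsto_const_nhds (x := (1:ℝ)) (f := atTop)).sub h1).pow k
      have h3 := h2.mul_const c
      simpa using h3
    have hev : ∀ᶠ d : ℕ in atTop, a < (1 - (d₀:ℝ)/d)^k * c :=
      haux.eventually_const_lt hac
    have hlow : ∀ᶠ d : ℕ in atTop,
        (1 - (d₀:ℝ)/d)^k * c ≤ (deBruijnIndep d k hk : ℝ) / (d:ℝ) ^ k := by
      filter_upwards [eventually_ge_atTop d₀, eventually_ge_atTop 1] with d hdd hd1
      set q := d / d₀ with hq
      have hq1 : 1 ≤ q := (Nat.one_le_div_iff hd₀).2 hdd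
      have hmul : q * d₀ ≤ d := Nat.div_mul_le_self d d₀
      have hup : d < q * d₀ + d₀ := by
        have h := Nat.div_add_mod d d₀
        have hm := Nat.mod_lt d hd₀
        calc d = d₀ * q + d % d₀ := by rw [hq]; omega
        _ < d₀ * q + d₀ := Nat.add_lt_add_left hm _
        _ = q * d₀ + d₀ := by ring
      have hα : q ^ k * deBruijnIndep d₀ k hk ≤ deBruijnIndep d k hk :=
        le_trans (S9.indep_scale hk d₀ q (by omega)) (S9.indep_mono hk hmul)
      have hdR : (0:ℝ) < d := by exact_mod_cast hd1
      have hd₀R : (0:ℝ) < d₀ := by exact_mod_cast hd₀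
      have h1 : (1 - (d₀:ℝ)/d) = ((d:ℝ) - d₀)/d := by field_simp
      have hsubnn : (0:ℝ) ≤ (d:ℝ) - d₀ := by
        have : (d₀:ℝ) ≤ d := by exact_mod_cast hdd
        linarith
      have hsub : ((d:ℝ) - d₀) ≤ ((q*d₀ : ℕ):ℝ) := by
        have : (d:ℝ) < ((q*d₀ : ℕ):ℝ) + d₀ := by exact_mod_cast hup
        linarith
      have hpow : ((d:ℝ)-d₀)^k ≤ ((q*d₀:ℕ):ℝ)^k := pow_le_pow_left₀ hsubnn hsub k
      have hcast : ((q*d₀:ℕ):ℝ)^k = (q:ℝ)^k * ((d₀:ℝ))^k := by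
        push_cast
        rw [mul_pow]
      have hαR : ((q:ℝ))^k * (deBruijnIndep d₀ k hk : ℝ) ≤ (deBruijnIndep d k hk : ℝ) := by
        exact_mod_cast hα
      rw [h1, hc, div_pow, div_mul_div_comm]
      rw [div_le_div_iff₀ (by positivity) (by positivity)]
      calc ((d:ℝ)-d₀)^k * (deBruijnIndep d₀ k hk : ℝ) * (d:ℝ)^k
          ≤ ((q:ℝ)^k * (d₀:ℝ)^k) * (deBruijnIndep d₀ k hk : ℝ) * (d:ℝ)^k := by
            rw [← hcast]
            exact mul_le_mul_of_nonneg_right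
              (mul_le_mul_of_nonneg_right hpow (Nat.cast_nonneg _)) (by positivity)
      _ = ((q:ℝ)^k * (deBruijnIndep d₀ k hk : ℝ)) * ((d:ℝ)^k * (d₀:ℝ)^k) := by ring
      _ ≤ (deBruijnIndep d k hk : ℝ) * ((d:ℝ)^k * (d₀:ℝ)^k) :=
            mul_le_mul_of_nonneg_right hαR (by positivity)
    filter_upwards [hev, hlow] with d h1 h2
    linarith
  · intro a ha
    filter_upwards [eventually_ge_atTop 1] with d hd1
    have := S9.F1 k hk d hd1
    linarith
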